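/- arXiv:0801.1749 — 12 statements merged into one kernel-verified Lean document; each statement's English description precedes it below -/
import Mathlib

section
/- Let k ≥ 1 be an integer and let q_0, q_1, …, q_k be real polynomials with q_k not identically zero. Define the linear differential operator U_Q on ℝ[x] by U_Q(p) = q_0·p + q_1·p' + q_2·p'' + … + q_k·p^(k). Then U_Q does not preserve the set of non-negative polynomials of degree 2k: there exists a polynomial p ∈ ℝ[x] of degree 2k with p(x) ≥ 0 for all real x, and a real number x_0, such that (U_Q(p))(x_0) < 0. -/
open Polynomial

lemma eval_iter_deriv (x₀ : ℝ) (n i : ℕ) :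
    (derivative^[i] ((X - C x₀) ^ n)).eval x₀ = if i = n then (n.factorial : ℝ) else 0 := by
  rw [iterate_derivative_X_sub_pow]
  rcases lt_trichotomy i n with h | h | h
  · simp [Nat.sub_ne_zero_of_lt h, h.ne, zero_pow (Nat.sub_ne_zero_of_lt h)]
  · subst h
    simp [Nat.descFactorial_self]
  · simp [Nat.descFactorial_eq_zero_iff_lt.mpr h, h.ne']

theorem stmt_0 (k : ℕ) (hk : 1 ≤ k) (q : ℕ → Polynomial ℝ) (hqk : q k ≠ 0) :
    ∃ p : Polynomial ℝ, p.natDegree = 2 * k ∧ (∀ x : ℝ, 0 ≤ p.eval x) ∧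
      ∃ x₀ : ℝ,
        (∑ i ∈ Finset.range (k + 1), q i * (Polynomial.derivative^[i] p)).eval x₀ < 0 := by
  obtain ⟨x₀, hx₀⟩ : ∃ x : ℝ, (q k).eval x ≠ 0 := by
    by_contra h
    push_neg at h
    exact hqk (Polynomial.funext fun x => by simp [h x])
  set a := (q k).eval x₀ with ha
  set b := (q 0).eval x₀ with hb
  set kf : ℝ := (k.factorial : ℝ) with hkf
  have hkf0 : 0 < kf := by positivity
  set ε : ℝ := min 1 (kf / (|b| + 1)) with hε
  have hε0 : 0 < ε := lt_min one_pos (by positivity)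
  have hbε : b * ε < 2 * kf := by
    have h1 : b * ε ≤ |b| * ε := mul_le_mul_of_nonneg_right (le_abs_self b) hε0.le
    have h2 : |b| * ε ≤ |b| * (kf / (|b| + 1)) :=
      mul_le_mul_of_nonneg_left (min_le_right _ _) (abs_nonneg b)
    have hpos : 0 < kf / (|b| + 1) := by positivity
    have h3 : |b| * (kf / (|b| + 1)) < kf :=
      calc |b| * (kf / (|b| + 1)) < (|b| + 1) * (kf / (|b| + 1)) :=
            mul_lt_mul_of_pos_right (lt_add_one |b|) hpos
        _ = kf := by field_simp
    linarith
  set t : ℝ := a * ε with ht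
  set p : Polynomial ℝ := ((X - C x₀) ^ k - C t) ^ 2 with hp
  have hdeg1 : ((X - C x₀) ^ k - C t).natDegree = k := by
    rw [natDegree_sub_eq_left_of_natDegree_lt]
    · simp
    · simp [Nat.lt_of_lt_of_le one_pos hk]
  refine ⟨p, ?_, ?_, x₀, ?_⟩
  · rw [hp, natDegree_pow, hdeg1, mul_comm]
  · intro x
    rw [hp]
    simp only [eval_pow]
    exact sq_nonneg _
  · have hprw : p = (X - C x₀) ^ (2 * k)
        - (C (2 * t) * (X - C x₀) ^ k - C (t ^ 2) * (X - C x₀) ^ 0) := by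
      rw [hp, sub_sq, ← pow_mul, mul_comm k 2]
      simp only [C_mul, C_pow, map_ofNat, pow_zero, mul_one]
      ring
    have key : ∀ i, (derivative^[i] p).eval x₀ =
        (if i = 2 * k then ((2*k).factorial : ℝ) else 0)
        - (2 * t * (if i = k then kf else 0)
        - t ^ 2 * (if i = 0 then ((0:ℕ).factorial : ℝ) else 0)) := by
      intro i
      rw [hprw]
      simp only [iterate_derivative_sub, iterate_derivative_C_mul,
        eval_sub, eval_mul, eval_C]
      rw [eval_iter_deriv, eval_iter_deriv, eval_iter_deriv]
    rw [eval_finset_sum]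
    simp only [eval_mul]
    rw [Finset.sum_range_succ]
    have hsum0 : ∑ i ∈ Finset.range k, (q i).eval x₀ * (derivative^[i] p).eval x₀
        = b * t ^ 2 := by
      rw [Finset.sum_eq_single_of_mem 0 (Finset.mem_range.mpr (Nat.lt_of_lt_of_le one_pos hk))]
      · have h2k : (0 : ℕ) ≠ 2 * k := by omega
        have hk0 : (0 : ℕ) ≠ k := by omega
        rw [key 0, if_neg h2k, if_neg hk0, if_pos rfl, ← hb]
        norm_num [Nat.factorial]
      · intro i hi hne
        have h1 : i ≠ 2 * k := by simp at hi; omega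
        have h2 : i ≠ k := by simp at hi; omega
        rw [key i, if_neg h1, if_neg h2, if_neg hne]
        ring
    have h1 : k ≠ 2 * k := by omega
    have h2 : k ≠ 0 := by omega
    rw [hsum0, key k, if_neg h1, if_neg h2, if_pos rfl, ← ha]
    have heq : b * t ^ 2 + a * (0 - (2 * t * kf - t ^ 2 * 0))
        = a ^ 2 * ε * (b * ε - 2 * kf) := by rw [ht]; ring
    rw [heq]
    exact mul_neg_of_pos_of_neg (by positivity) (by linarith)
end

section
/- Let k ≥ 1 be an integer and let q_0, q_1, …, q_k be real polynomials with q_k not identically zero. Define the linear differential operator U_Q on ℝ[x] by U_Q(p) = q_0·p + q_1·p' + … + q_k·p^(k). Then U_Q does not preserve the set of positive polynomials of degree 2k: there exists a polynomial p ∈ ℝ[x] of degree 2k with p(x) > 0 for all real x, and a real number x_0, such that (U_Q(p))(x_0) ≤ 0. -/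
open Polynomial

private lemma aux_expand (a t ε : ℝ) (k : ℕ) :
    ((X - C a) ^ k - C t) ^ 2 + C ε =
      (X - C a) ^ (2 * k) - C (2 * t) * (X - C a) ^ k + C (t ^ 2 + ε) := by
  have h2 : (C (2:ℝ) : Polynomial ℝ) = 2 := map_ofNat C 2
  rw [two_mul, pow_add, C_add, C_pow, C_mul, h2]
  ring

private lemma aux_eval (a t ε : ℝ) (k i : ℕ) (hk : 1 ≤ k) (hik : i ≤ k) :
    ((Polynomial.derivative^[i] (((X - C a) ^ k - C t) ^ 2 + C ε))).eval a =
      if i = 0 then t ^ 2 + ε else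
        if i = k then -(2 * t) * (k.factorial : ℝ) else 0 := by
  rw [aux_expand, iterate_map_add Polynomial.derivative i, iterate_derivative_sub,
    iterate_derivative_C_mul, iterate_derivative_X_sub_pow, iterate_derivative_X_sub_pow]
  rcases eq_or_ne i 0 with rfl | hi0
  · have h1 : 2 * k ≠ 0 := by omega
    have h2 : k ≠ 0 := by omega
    simp [zero_pow h1, zero_pow h2, sub_self]
  · rw [iterate_derivative_C (Nat.pos_of_ne_zero hi0)]
    rcases eq_or_ne i k with rfl | hik'
    · have h1 : 2 * i - i ≠ 0 := by omega
      simp [hi0, Nat.descFactorial_self, zero_pow h1, Nat.sub_self, sub_self]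
    · have h1 : 2 * k - i ≠ 0 := by omega
      have h2 : k - i ≠ 0 := by omega
      simp [hi0, hik', zero_pow h1, zero_pow h2, sub_self]

private lemma aux_deg (a t ε : ℝ) (k : ℕ) (hk : 1 ≤ k) :
    (((X - C a) ^ k - C t) ^ 2 + C ε).natDegree = 2 * k := by
  rw [aux_expand]
  have h1 : ((X - C a) ^ (2 * k) : Polynomial ℝ).natDegree = 2 * k := by
    rw [natDegree_pow, natDegree_X_sub_C, mul_one]
  have h2 : ((- (C (2 * t) * (X - C a) ^ k) + C (t ^ 2 + ε)) : Polynomial ℝ).natDegree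
      < 2 * k := by
    refine lt_of_le_of_lt (natDegree_add_le _ _) ?_
    rw [natDegree_neg, natDegree_C]
    have : (C (2 * t) * (X - C a) ^ k : Polynomial ℝ).natDegree ≤ k := by
      refine le_trans (natDegree_C_mul_le _ _) ?_
      rw [natDegree_pow, natDegree_X_sub_C, mul_one]
    omega
  calc ((X - C a) ^ (2 * k) - C (2 * t) * (X - C a) ^ k + C (t ^ 2 + ε)).natDegree
      = ((X - C a) ^ (2 * k) +
          (- (C (2 * t) * (X - C a) ^ k) + C (t ^ 2 + ε))).natDegree := by ring_nf
    _ = 2 * k := by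
        rw [natDegree_add_eq_left_of_natDegree_lt (by rw [h1]; exact h2), h1]

theorem stmt_1 (k : ℕ) (hk : 1 ≤ k) (q : ℕ → Polynomial ℝ) (hqk : q k ≠ 0) :
    ∃ p : Polynomial ℝ, p.natDegree = 2 * k ∧ (∀ x : ℝ, 0 < p.eval x) ∧
      ∃ x₀ : ℝ,
        (∑ i ∈ Finset.range (k + 1), q i * (Polynomial.derivative^[i] p)).eval x₀ ≤ 0 := by
  obtain ⟨a, ha⟩ : ∃ a : ℝ, (q k).eval a ≠ 0 := by
    by_contra h
    push_neg at h
    exact hqk (Polynomial.funext fun x => by simp [h x])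
  obtain ⟨A, hA⟩ : ∃ A : ℝ, A = (q 0).eval a := ⟨_, rfl⟩
  obtain ⟨B, hB⟩ : ∃ B : ℝ, B = (q k).eval a := ⟨_, rfl⟩
  have hBne : B ≠ 0 := hB ▸ ha
  obtain ⟨u, hu_def⟩ : ∃ u : ℝ, u = (|A| + 1)⁻¹ := ⟨_, rfl⟩
  have hu : 0 < u := by rw [hu_def]; positivity
  obtain ⟨t, ht⟩ : ∃ t : ℝ, t = B * u := ⟨_, rfl⟩
  obtain ⟨ε, hε_def⟩ : ∃ ε : ℝ, ε = B ^ 2 * u ^ 2 := ⟨_, rfl⟩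
  have hB2 : 0 < B ^ 2 := by positivity
  have hε : 0 < ε := by rw [hε_def]; positivity
  refine ⟨((X - C a) ^ k - C t) ^ 2 + C ε, aux_deg a t ε k hk, ?_, a, ?_⟩
  · intro x
    simp only [eval_add, eval_pow, eval_sub, eval_X, eval_C]
    nlinarith [sq_nonneg ((x - a) ^ k - t), hε]
  · have hderiv : ∀ i ∈ Finset.range (k + 1),
        ((q i) * (Polynomial.derivative^[i]
          (((X - C a) ^ k - C t) ^ 2 + C ε))).eval a =
          (if i = 0 then A * (t ^ 2 + ε) else 0) +
          (if i = k then B * (-(2 * t) * (k.factorial : ℝ)) else 0) := by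
      intro i hi
      rw [Finset.mem_range] at hi
      rw [eval_mul, aux_eval a t ε k i hk (by omega)]
      rcases eq_or_ne i 0 with rfl | hi0
      · have : ¬ (0 = k) := by omega
        simp [this, hA]
      · rcases eq_or_ne i k with rfl | hik'
        · simp [hi0, hB]
        · simp [hi0, hik']
    rw [eval_finset_sum, Finset.sum_congr rfl hderiv, Finset.sum_add_distrib,
      Finset.sum_ite_eq' (Finset.range (k + 1)) 0
        (fun _ => A * (t ^ 2 + ε)),
      Finset.sum_ite_eq' (Finset.range (k + 1)) k
        (fun _ => B * (-(2 * t) * (k.factorial : ℝ)))]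
    have h0mem : (0 : ℕ) ∈ Finset.range (k + 1) := by simp
    have hkmem : k ∈ Finset.range (k + 1) := by simp
    rw [if_pos h0mem, if_pos hkmem]
    have hfac : (1 : ℝ) ≤ (k.factorial : ℝ) := by
      exact_mod_cast Nat.one_le_iff_ne_zero.mpr k.factorial_ne_zero
    have hAu : A * u ≤ 1 := by
      have h1 : (|A| + 1) * u = 1 := by
        rw [hu_def]; exact mul_inv_cancel₀ (by positivity)
      have h2 : A * u ≤ (|A| + 1) * u :=
        mul_le_mul_of_nonneg_right (by linarith [le_abs_self A]) hu.le
      linarith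
    have key : A * (t ^ 2 + ε) + B * (-(2 * t) * (k.factorial : ℝ)) =
        2 * B ^ 2 * u * (A * u - (k.factorial : ℝ)) := by
      rw [ht, hε_def]; ring
    rw [key]
    apply mul_nonpos_of_nonneg_of_nonpos
    · positivity
    · linarith
end

section
/- Let k ≥ 1 be an integer and let q_0, q_1, …, q_k be real polynomials with q_k not identically zero. Define the linear differential operator U_Q on ℝ[x] by U_Q(p) = q_0·p + q_1·p' + … + q_k·p^(k). Then U_Q does not preserve the set of elliptic polynomials of degree 2k: there exists a polynomial p ∈ ℝ[x] of degree 2k having no real roots such that U_Q(p) has at least one real root. -/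
open Polynomial

private lemma mul_coeff_nonneg {f g : Polynomial ℝ} (hf : ∀ i, 0 ≤ f.coeff i)
    (hg : ∀ i, 0 ≤ g.coeff i) : ∀ i, 0 ≤ (f * g).coeff i := by
  intro i
  rw [Polynomial.coeff_mul]
  exact Finset.sum_nonneg fun x _ => mul_nonneg (hf _) (hg _)

private lemma pow_coeff_nonneg {f : Polynomial ℝ} (hf : ∀ i, 0 ≤ f.coeff i) (n : ℕ) :
    ∀ i, 0 ≤ (f ^ n).coeff i := by
  induction n with
  | zero =>
    intro i
    rw [pow_zero, Polynomial.coeff_one]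
    split_ifs <;> norm_num
  | succ n ih =>
    rw [pow_succ]
    exact mul_coeff_nonneg ih hf

private lemma eval_nonneg_of_coeff_nonneg {f : Polynomial ℝ} (hf : ∀ i, 0 ≤ f.coeff i)
    {x : ℝ} (hx : 0 ≤ x) : 0 ≤ f.eval x := by
  rw [Polynomial.eval_eq_sum_range]
  exact Finset.sum_nonneg fun j _ => mul_nonneg (hf j) (pow_nonneg hx j)

private lemma coeff_le_eval {f : Polynomial ℝ} (hf : ∀ i, 0 ≤ f.coeff i) {x : ℝ} (hx : 0 ≤ x)
    (i : ℕ) : f.coeff i * x ^ i ≤ f.eval x := by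
  rcases le_or_gt i f.natDegree with h | h
  · rw [Polynomial.eval_eq_sum_range]
    exact Finset.single_le_sum (fun j _ => mul_nonneg (hf j) (pow_nonneg hx j))
      (Finset.mem_range.mpr (Nat.lt_succ_of_le h))
  · rw [Polynomial.coeff_eq_zero_of_natDegree_lt h, zero_mul]
    exact eval_nonneg_of_coeff_nonneg hf hx

private lemma pair_coeff_le_eval {f : Polynomial ℝ} (hf : ∀ i, 0 ≤ f.coeff i) {x : ℝ}
    (hx : 0 ≤ x) {m : ℕ} (hm : m ≠ 0) :
    f.coeff 0 + f.coeff m * x ^ m ≤ f.eval x := by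
  rcases le_or_gt m f.natDegree with h | h
  · rw [Polynomial.eval_eq_sum_range]
    have hsub : ({0, m} : Finset ℕ) ⊆ Finset.range (f.natDegree + 1) := by
      intro j hj
      rcases Finset.mem_insert.mp hj with rfl | hj
      · exact Finset.mem_range.mpr (Nat.succ_pos _)
      · rw [Finset.mem_singleton] at hj
        subst hj
        exact Finset.mem_range.mpr (Nat.lt_succ_of_le h)
    have hle := Finset.sum_le_sum_of_subset_of_nonneg hsub
      (fun j _ _ => mul_nonneg (hf j) (pow_nonneg hx j))
    calc f.coeff 0 + f.coeff m * x ^ m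
        = ∑ j ∈ ({0, m} : Finset ℕ), f.coeff j * x ^ j := by
          rw [Finset.sum_pair (Ne.symm hm)]; ring
      _ ≤ _ := hle
  · rw [Polynomial.coeff_eq_zero_of_natDegree_lt h, zero_mul, add_zero]
    simpa using coeff_le_eval hf hx 0

theorem stmt_2 (k : ℕ) (hk : 1 ≤ k) (q : ℕ → Polynomial ℝ) (hqk : q k ≠ 0) :
    ∃ p : Polynomial ℝ, p.natDegree = 2 * k ∧ (∀ x : ℝ, p.eval x ≠ 0) ∧
      ∃ x₀ : ℝ,
        (∑ i ∈ Finset.range (k + 1), q i * (Polynomial.derivative^[i] p)).eval x₀ = 0 := by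
  -- choose a point where the leading coefficient polynomial does not vanish
  obtain ⟨a, ha⟩ : ∃ a : ℝ, (q k).eval a ≠ 0 := by
    by_contra h
    push_neg at h
    exact hqk (Polynomial.funext fun x => by simp [h x])
  set A : ℝ := (q k).eval a with hA
  have habsA : 0 < |A| := abs_pos.mpr ha
  have hfac : (0:ℝ) < (k.factorial : ℝ) := by positivity
  set M : ℝ := ∑ i ∈ Finset.range k, |(q i).eval a| * (i.factorial : ℝ) * 2 ^ k with hM
  have hM0 : 0 ≤ M := Finset.sum_nonneg fun i _ => by positivity
  set t : ℝ := min 1 ((k.factorial : ℝ) * |A| / (2 * (M + 1))) with ht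
  have ht0 : 0 < t := lt_min one_pos (by positivity)
  have ht1 : t ≤ 1 := min_le_left _ _
  have htM : M * t < (k.factorial : ℝ) * |A| := by
    have h2M : (0:ℝ) < 2 * (M + 1) := by linarith
    have h1 : t ≤ (k.factorial : ℝ) * |A| / (2 * (M + 1)) := min_le_right _ _
    have h2 : M * t ≤ M * ((k.factorial : ℝ) * |A| / (2 * (M + 1))) :=
      mul_le_mul_of_nonneg_left h1 hM0
    have h3 : M * ((k.factorial : ℝ) * |A| / (2 * (M + 1))) < (k.factorial : ℝ) * |A| := by
      rw [mul_div_assoc', div_lt_iff₀ h2M]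
      nlinarith [mul_pos hfac habsA]
    linarith
  set Q0 : Polynomial ℝ := (X ^ 2 + C (t ^ 2)) ^ k with hQ0
  have hbase : ∀ i, 0 ≤ ((X : Polynomial ℝ) ^ 2 + C (t ^ 2)).coeff i := by
    intro i
    rw [Polynomial.coeff_add, Polynomial.coeff_X_pow, Polynomial.coeff_C]
    split_ifs <;> norm_num <;> positivity
  have hcn : ∀ i, 0 ≤ Q0.coeff i := pow_coeff_nonneg hbase k
  have hQ0t : Q0.eval t = 2 ^ k * t ^ (2 * k) := by
    rw [hQ0]
    simp only [Polynomial.eval_pow, Polynomial.eval_add, Polynomial.eval_X, Polynomial.eval_C]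
    rw [show t ^ 2 + t ^ 2 = 2 * t ^ 2 by ring, mul_pow, ← pow_mul]
  have hQ00 : Q0.coeff 0 = t ^ (2 * k) := by
    rw [Polynomial.coeff_zero_eq_eval_zero, hQ0]
    simp only [Polynomial.eval_pow, Polynomial.eval_add, Polynomial.eval_X, Polynomial.eval_C]
    rw [show (0:ℝ) ^ 2 + t ^ 2 = t ^ 2 by ring, ← pow_mul]
  have hboundk : Q0.coeff k ≤ (2 ^ k - 1) * t ^ k := by
    have hpair := pair_coeff_le_eval hcn ht0.le (m := k) (by omega)
    rw [hQ0t, hQ00] at hpair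
    have htk : (0:ℝ) < t ^ k := pow_pos ht0 k
    have h2k : t ^ (2 * k) = t ^ k * t ^ k := by rw [two_mul, pow_add]
    rw [h2k] at hpair
    apply le_of_mul_le_mul_right _ htk
    calc Q0.coeff k * t ^ k ≤ 2 ^ k * (t ^ k * t ^ k) - t ^ k * t ^ k := by linarith
      _ = (2 ^ k - 1) * t ^ k * t ^ k := by ring
  have hboundlt : ∀ i < k, Q0.coeff i ≤ 2 ^ k * t ^ (k + 1) := by
    intro i hi
    have h1 := coeff_le_eval hcn ht0.le i
    rw [hQ0t] at h1
    have h2 : t ^ (2 * k) ≤ t ^ (k + 1) * t ^ i := by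
      rw [← pow_add]
      exact pow_le_pow_of_le_one ht0.le ht1 (by omega)
    have hti : (0:ℝ) < t ^ i := pow_pos ht0 i
    apply le_of_mul_le_mul_right _ hti
    calc Q0.coeff i * t ^ i ≤ 2 ^ k * t ^ (2 * k) := h1
      _ ≤ 2 ^ k * (t ^ (k + 1) * t ^ i) := by
          apply mul_le_mul_of_nonneg_left h2 (by positivity)
      _ = 2 ^ k * t ^ (k + 1) * t ^ i := by ring
  set S : ℝ := ∑ i ∈ Finset.range (k + 1), (q i).eval a * (i.factorial : ℝ) * Q0.coeff i with hS
  set c : ℝ := -S / ((k.factorial : ℝ) * A * t ^ k) with hc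
  -- the bound |S| < 2^k * (k! * |A| * t^k)
  have hSbound : |S| < 2 ^ k * ((k.factorial : ℝ) * |A| * t ^ k) := by
    have htk : (0:ℝ) < t ^ k := pow_pos ht0 k
    have hsplit : S = (∑ i ∈ Finset.range k, (q i).eval a * (i.factorial : ℝ) * Q0.coeff i)
        + A * (k.factorial : ℝ) * Q0.coeff k := by
      rw [hS, Finset.sum_range_succ, hA]
    have habs1 : |∑ i ∈ Finset.range k, (q i).eval a * (i.factorial : ℝ) * Q0.coeff i|
        ≤ M * t ^ (k + 1) := by
      calc |∑ i ∈ Finset.range k, (q i).eval a * (i.factorial : ℝ) * Q0.coeff i|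
          ≤ ∑ i ∈ Finset.range k, |(q i).eval a * (i.factorial : ℝ) * Q0.coeff i| :=
            Finset.abs_sum_le_sum_abs _ _
        _ ≤ ∑ i ∈ Finset.range k, |(q i).eval a| * (i.factorial : ℝ) * 2 ^ k * t ^ (k + 1) := by
            apply Finset.sum_le_sum
            intro i hi
            rw [abs_mul, abs_mul, Nat.abs_cast, abs_of_nonneg (hcn i)]
            have h1 := hboundlt i (Finset.mem_range.mp hi)
            have h2 : (0:ℝ) ≤ |(q i).eval a| * (i.factorial : ℝ) := by positivity
            calc |(q i).eval a| * (i.factorial : ℝ) * Q0.coeff i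
                ≤ |(q i).eval a| * (i.factorial : ℝ) * (2 ^ k * t ^ (k + 1)) :=
                  mul_le_mul_of_nonneg_left h1 h2
              _ = |(q i).eval a| * (i.factorial : ℝ) * 2 ^ k * t ^ (k + 1) := by ring
        _ = M * t ^ (k + 1) := by rw [hM, Finset.sum_mul]
    have habs2 : |A * (k.factorial : ℝ) * Q0.coeff k| ≤ |A| * (k.factorial : ℝ) * ((2 ^ k - 1) * t ^ k) := by
      rw [abs_mul, abs_mul, Nat.abs_cast, abs_of_nonneg (hcn k)]
      have h2 : (0:ℝ) ≤ |A| * (k.factorial : ℝ) := by positivity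
      exact mul_le_mul_of_nonneg_left hboundk h2
    have htriangle : |S| ≤ M * t ^ (k + 1) + |A| * (k.factorial : ℝ) * ((2 ^ k - 1) * t ^ k) := by
      rw [hsplit]
      exact le_trans (abs_add_le _ _) (add_le_add habs1 habs2)
    have hpow : t ^ (k + 1) = t * t ^ k := by rw [pow_succ]; ring
    nlinarith [mul_lt_mul_of_pos_right htM htk]
  have hcabs : |c| < 2 ^ k := by
    have hdpos : (0:ℝ) < (k.factorial : ℝ) * |A| * t ^ k := by positivity
    rw [hc, abs_div, abs_neg, abs_mul, abs_mul, Nat.abs_cast, abs_pow,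
      abs_of_pos ht0, div_lt_iff₀ hdpos]
    linarith [hSbound]
  set p : Polynomial ℝ := Q0.comp (X - C a) + C (c * t ^ k) * (X - C a) ^ k with hp
  -- Taylor expansion of p at a
  have htaylor : taylor a p = Q0 + C (c * t ^ k) * X ^ k := by
    rw [Polynomial.taylor_apply, hp]
    simp only [Polynomial.add_comp, Polynomial.mul_comp, Polynomial.C_comp,
      Polynomial.pow_comp, Polynomial.comp_assoc, Polynomial.sub_comp, Polynomial.X_comp]
    simp
  have hQ0deg : Q0.natDegree = 2 * k := by
    rw [hQ0, Polynomial.natDegree_pow, Polynomial.natDegree_X_pow_add_C, mul_comm]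
  refine ⟨p, ?_, ?_, a, ?_⟩
  · -- degree
    have h1 : (Q0.comp (X - C a)).natDegree = 2 * k := by
      rw [Polynomial.natDegree_comp, hQ0deg, Polynomial.natDegree_X_sub_C, mul_one]
    have h2 : (C (c * t ^ k) * (X - C a) ^ k).natDegree < (Q0.comp (X - C a)).natDegree := by
      rw [h1]
      calc (C (c * t ^ k) * (X - C a) ^ k).natDegree
          ≤ ((X - C a : Polynomial ℝ) ^ k).natDegree := Polynomial.natDegree_C_mul_le _ _
        _ = k := by rw [Polynomial.natDegree_pow, Polynomial.natDegree_X_sub_C, mul_one]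
        _ < 2 * k := by omega
    rw [hp, Polynomial.natDegree_add_eq_left_of_natDegree_lt h2, h1]
  · -- ellipticity
    intro x
    have heval : p.eval x = ((x - a) ^ 2 + t ^ 2) ^ k + c * t ^ k * (x - a) ^ k := by
      rw [hp, hQ0]
      simp only [Polynomial.eval_add, Polynomial.eval_mul, Polynomial.eval_comp,
        Polynomial.eval_pow, Polynomial.eval_sub, Polynomial.eval_X, Polynomial.eval_C]
    rw [heval]
    set u : ℝ := x - a with hu
    rcases eq_or_ne u 0 with h0 | hune
    · rw [h0, zero_pow (by omega : k ≠ 0)]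
      have : (0:ℝ) < ((0:ℝ) ^ 2 + t ^ 2) ^ k := by positivity
      intro hcontra
      rw [mul_zero, add_zero] at hcontra
      exact this.ne' hcontra
    · have huabs : 0 < |u| := abs_pos.mpr hune
      have h2 : 2 * t * |u| ≤ u ^ 2 + t ^ 2 := by
        nlinarith [sq_nonneg (|u| - t), sq_abs u]
      have h3 : (2 * t * |u|) ^ k ≤ (u ^ 2 + t ^ 2) ^ k :=
        pow_le_pow_left₀ (by positivity) h2 k
      have h4 : |c * t ^ k * u ^ k| < (2 * t * |u|) ^ k := by
        rw [abs_mul, abs_mul, abs_pow, abs_pow, abs_of_pos ht0, mul_pow, mul_pow]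
        have hpos : (0:ℝ) < t ^ k * |u| ^ k := by positivity
        calc |c| * t ^ k * |u| ^ k = |c| * (t ^ k * |u| ^ k) := by ring
          _ < 2 ^ k * (t ^ k * |u| ^ k) := mul_lt_mul_of_pos_right hcabs hpos
          _ = 2 ^ k * t ^ k * |u| ^ k := by ring
      have h5 := neg_abs_le (c * t ^ k * u ^ k)
      have : 0 < (u ^ 2 + t ^ 2) ^ k + c * t ^ k * u ^ k := by linarith
      exact this.ne'
  · -- the root at a
    have hfne : ((k.factorial : ℝ)) ≠ 0 := hfac.ne'
    have htkne : t ^ k ≠ 0 := (pow_pos ht0 k).ne'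
    have hder : ∀ i, (Polynomial.derivative^[i] p).eval a
        = (i.factorial : ℝ) * (taylor a p).coeff i := by
      intro i
      have h1 := congrFun (Polynomial.factorial_smul_hasseDeriv (R := ℝ) i) p
      rw [← h1, LinearMap.smul_apply, nsmul_eq_mul, Polynomial.eval_mul,
        Polynomial.eval_natCast, Polynomial.taylor_coeff]
    have hco : ∀ i, (taylor a p).coeff i = Q0.coeff i + if i = k then c * t ^ k else 0 := by
      intro i
      rw [htaylor, Polynomial.coeff_add, Polynomial.coeff_C_mul, Polynomial.coeff_X_pow,
        mul_ite, mul_one, mul_zero]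
    calc (∑ i ∈ Finset.range (k + 1), q i * (Polynomial.derivative^[i] p)).eval a
        = ∑ i ∈ Finset.range (k + 1), (q i).eval a *
            ((i.factorial : ℝ) * (Q0.coeff i + if i = k then c * t ^ k else 0)) := by
          rw [Polynomial.eval_finset_sum]
          refine Finset.sum_congr rfl fun i _ => ?_
          rw [Polynomial.eval_mul, hder i, hco i]
      _ = S + (q k).eval a * (k.factorial : ℝ) * (c * t ^ k) := by
          have hterm : ∀ i ∈ Finset.range (k + 1), (q i).eval a *
              ((i.factorial : ℝ) * (Q0.coeff i + if i = k then c * t ^ k else 0))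
              = (q i).eval a * (i.factorial : ℝ) * Q0.coeff i
                + (if i = k then (q i).eval a * (i.factorial : ℝ) * (c * t ^ k) else 0) := by
            intro i _
            split_ifs <;> ring
          rw [Finset.sum_congr rfl hterm, Finset.sum_add_distrib, Finset.sum_ite_eq',
            if_pos (Finset.self_mem_range_succ k), hS]
      _ = 0 := by
          have hAc : (q k).eval a * (k.factorial : ℝ) * (c * t ^ k) = -S := by
            rw [hc, ← hA]
            field_simp
          rw [hAc]
          ring
end

section
/- Let α = (α_0, α_1, α_2, …) be an infinite sequence of real numbers and let U_α : ℝ[x] → ℝ[x] be the linear operator defined by U_α(p) = Σ_{i≥0} α_i·p^(i) (a finite sum for each polynomial p). Then the following are equivalent: (a) U_α preserves non-negativity, i.e., for every polynomial p with p(x) ≥ 0 for all real x, (U_α(p))(x) ≥ 0 for all real x; (b) for every non-negative polynomial p(x) = a_n x^n + … + a_1 x + a_0, one has a_0·α_0 + 1!·a_1·α_1 + … + n!·a_n·α_n ≥ 0; (c) for every l ≥ 0, the (l+1)×(l+1) Hankel matrix whose (i,j)-entry (0 ≤ i,j ≤ l) equals (i+j)!·α_{i+j} is positive semi-definite. -/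
open Polynomial

/-- The infinite-order constant-coefficient operator `U_α(p) = ∑ αᵢ p⁽ⁱ⁾`
(a finite sum since high derivatives of a polynomial vanish). -/
noncomputable def Ualpha (α : ℕ → ℝ) (p : Polynomial ℝ) : Polynomial ℝ :=
  ∑ i ∈ Finset.range (p.natDegree + 1), α i • (Polynomial.derivative^[i] p)

/-!
Write `L` for the linear functional on `ℝ[X]` with `L(Xᵏ) = mₖ := k! αₖ`. By Taylor's formula
`(U_α p)(x) = L(p(X + x))`, and `p(X + x)` is non-negative whenever `p` is, so (a) and (b) both
say that `L` is non-negative on non-negative polynomials. The Hankel quadratic form of `(mₖ)` at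
`v` is `L(q²)` for `q = ∑ vᵢ Xⁱ`, so (c) says that `L` is non-negative on squares. The two agree
because every non-negative real polynomial is a sum of squares: subtracting its minimum value
leaves a polynomial with a double root at the minimiser, and one divides it out and recurses.
-/

open Finset Nat

namespace Polynomial

theorem sq_X_sub_C_dvd_of_forall_eval_nonneg {p : ℝ[X]} (hp : ∀ x, 0 ≤ p.eval x) {x₀ : ℝ}
    (hroot : p.IsRoot x₀) : (X - C x₀) ^ 2 ∣ p := by
  rcases eq_or_ne p 0 with rfl | hp0
  · exact dvd_zero _
  have hmin : IsLocalMin (fun x => p.eval x) x₀ :=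
    IsMinOn.isLocalMin (fun y _ => by simpa [hroot.eq_zero] using hp y) Filter.univ_mem
  have hderiv : (derivative p).IsRoot x₀ := by
    simpa [Polynomial.deriv] using hmin.deriv_eq_zero
  have hmult : 2 ≤ p.rootMultiplicity x₀ :=
    (one_lt_rootMultiplicity_iff_isRoot hp0).mpr ⟨hroot, hderiv⟩
  exact (pow_dvd_pow _ hmult).trans (pow_rootMultiplicity_dvd p x₀)

theorem forall_eval_nonneg_of_sq_X_sub_C_mul {q : ℝ[X]} {x₀ : ℝ}
    (h : ∀ x, 0 ≤ ((X - C x₀) ^ 2 * q).eval x) (x : ℝ) : 0 ≤ q.eval x := by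
  have hclosed : IsClosed {x | 0 ≤ q.eval x} := isClosed_le continuous_const q.continuous
  have hcompl : {x₀}ᶜ ⊆ {x | 0 ≤ q.eval x} := fun y hy => by
    have hpos : 0 < (y - x₀) ^ 2 := by
      have : y - x₀ ≠ 0 := sub_ne_zero.mpr hy
      positivity
    exact nonneg_of_mul_nonneg_right (by simpa using h y) hpos
  exact hclosed.closure_subset_iff.mpr hcompl <| (dense_compl_singleton x₀).closure_eq ▸ trivial

theorem isSumSq_of_forall_eval_nonneg {p : ℝ[X]} (hp : ∀ x, 0 ≤ p.eval x) : IsSumSq p := by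
  induction hn : p.natDegree using Nat.strong_induction_on generalizing p with
  | _ n ih =>
  rcases Nat.eq_zero_or_pos n with rfl | hpos
  · obtain ⟨c, rfl⟩ := natDegree_eq_zero.mp hn
    have hc : 0 ≤ c := by simpa using hp 0
    rw [← Real.mul_self_sqrt hc, C_mul]
    exact IsSumSq.mul_self _
  obtain ⟨x₀, hx₀⟩ := p.exists_forall_norm_le
  simp only [Real.norm_eq_abs, abs_of_nonneg (hp _)] at hx₀
  set m := p.eval x₀
  have hsub : ∀ x, 0 ≤ (p - C m).eval x := fun x => by simpa using hx₀ x
  obtain ⟨q, hq⟩ := sq_X_sub_C_dvd_of_forall_eval_nonneg hsub (x₀ := x₀) (by simp [m])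
  have hdeg : (p - C m).natDegree = n := by rw [natDegree_sub_C, hn]
  have hq0 : q ≠ 0 := by
    rintro rfl
    rw [hq, mul_zero, natDegree_zero] at hdeg
    omega
  have hqdeg : q.natDegree < n := by
    rw [← hdeg, hq, natDegree_mul (pow_ne_zero _ (X_sub_C_ne_zero x₀)) hq0, natDegree_pow,
      natDegree_X_sub_C]
    omega
  have hqsos : IsSumSq q :=
    ih _ hqdeg (forall_eval_nonneg_of_sq_X_sub_C_mul (hq ▸ hsub)) rfl
  have hdecomp : p = (X - C x₀) ^ 2 * q + C (√m) * C (√m) := by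
    rw [← C_mul, Real.mul_self_sqrt (hp x₀), ← hq, sub_add_cancel]
  rw [hdecomp, sq]
  exact ((IsSumSq.mul_self _).mul hqsos).add (IsSumSq.mul_self _)

section Riesz

variable {R : Type*} [CommSemiring R] (m : ℕ → R)

noncomputable def rieszFunctional : R[X] →ₗ[R] R :=
  lsum fun n => m n • LinearMap.id

theorem rieszFunctional_monomial (n : ℕ) (c : R) :
    rieszFunctional m (monomial n c) = m n * c := by
  simp [rieszFunctional, sum_monomial_index]

theorem rieszFunctional_apply (p : R[X]) :
    rieszFunctional m p = ∑ i ∈ range (p.natDegree + 1), m i * p.coeff i := by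
  simp [rieszFunctional, sum_over_range]

end Riesz

theorem eval_Ualpha (α : ℕ → ℝ) (p : ℝ[X]) (x : ℝ) :
    (Ualpha α p).eval x = rieszFunctional (fun k => k ! * α k) (taylor x p) := by
  simp only [Ualpha, rieszFunctional_apply, natDegree_taylor, eval_finsetSum, eval_smul,
    taylor_coeff, ← factorial_smul_hasseDeriv]
  refine sum_congr rfl fun i _ => ?_
  rw [LinearMap.smul_apply, eval_smul, nsmul_eq_mul, smul_eq_mul]
  ring

end Polynomial

namespace Matrix

def hankel {R : Type*} (m : ℕ → R) (n : ℕ) : Matrix (Fin n) (Fin n) R :=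
  of fun i j => m (i + j)

theorem isHermitian_hankel {R : Type*} [Star R] [TrivialStar R]
    (m : ℕ → R) (n : ℕ) : (hankel m n).IsHermitian := by
  ext i j
  simp [hankel, Nat.add_comm]

theorem dotProduct_hankel_mulVec {R : Type*} [CommSemiring R] (m : ℕ → R) {n : ℕ}
    (v : Fin n → R) :
    v ⬝ᵥ hankel m n *ᵥ v =
      rieszFunctional m ((∑ i : Fin n, monomial i (v i)) * ∑ i : Fin n, monomial i (v i)) := by
  rw [sum_mul_sum]
  simp only [map_sum, monomial_mul_monomial, rieszFunctional_monomial, dotProduct, mulVec, hankel,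
    of_apply, mul_sum]
  refine sum_congr rfl fun i _ => sum_congr rfl fun j _ => ?_
  ring

end Matrix

namespace Polynomial

open Matrix

theorem rieszFunctional_nonneg_of_isSumSq {m : ℕ → ℝ}
    (hm : ∀ n, (hankel m (n + 1)).PosSemidef) {s : ℝ[X]} (hs : IsSumSq s) :
    0 ≤ rieszFunctional m s := by
  induction hs with
  | zero => simp
  | sq_add a _ ih =>
    have ha : ∑ i : Fin (a.natDegree + 1), monomial i (a.coeff i) = a := by
      rw [Fin.sum_univ_eq_sum_range (fun i => monomial i (a.coeff i)), ← as_sum_range]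
    have hsq : 0 ≤ rieszFunctional m (a * a) := by
      simpa [dotProduct_hankel_mulVec, ha] using
        (hm a.natDegree).dotProduct_mulVec_nonneg fun i => a.coeff i
    rw [map_add]
    exact add_nonneg hsq ih

theorem rieszFunctional_nonneg_iff_posSemidef_hankel (m : ℕ → ℝ) :
    (∀ p : ℝ[X], (∀ x, 0 ≤ p.eval x) → 0 ≤ rieszFunctional m p) ↔
      ∀ n, (hankel m (n + 1)).PosSemidef := by
  refine ⟨fun h n => ?_, fun hm p hp =>
    rieszFunctional_nonneg_of_isSumSq hm (isSumSq_of_forall_eval_nonneg hp)⟩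
  refine .of_dotProduct_mulVec_nonneg (isHermitian_hankel m _) fun v => ?_
  rw [star_trivial, dotProduct_hankel_mulVec]
  exact h _ fun x => by rw [eval_mul]; exact mul_self_nonneg _

end Polynomial

theorem stmt_4 (α : ℕ → ℝ) :
    ((∀ p : Polynomial ℝ, (∀ x : ℝ, 0 ≤ p.eval x) → ∀ x : ℝ, 0 ≤ (Ualpha α p).eval x) ↔
      (∀ p : Polynomial ℝ, (∀ x : ℝ, 0 ≤ p.eval x) →
        0 ≤ ∑ i ∈ Finset.range (p.natDegree + 1), (i.factorial : ℝ) * p.coeff i * α i)) ∧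
    ((∀ p : Polynomial ℝ, (∀ x : ℝ, 0 ≤ p.eval x) →
        0 ≤ ∑ i ∈ Finset.range (p.natDegree + 1), (i.factorial : ℝ) * p.coeff i * α i) ↔
      (∀ l : ℕ, (Matrix.of fun i j : Fin (l + 1) =>
        (((i : ℕ) + (j : ℕ)).factorial : ℝ) * α ((i : ℕ) + (j : ℕ))).PosSemidef)) := by
  have hL (p : ℝ[X]) : ∑ i ∈ range (p.natDegree + 1), (i ! : ℝ) * p.coeff i * α i =
      rieszFunctional (fun k => k ! * α k) p := by
    rw [rieszFunctional_apply]
    exact sum_congr rfl fun i _ => by ring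
  simp only [hL]
  -- the matrix in (c) is `hankel (fun k => k ! * α k) (l + 1)` up to unfolding
  refine ⟨⟨fun h p hp => ?_, fun h p hp x => ?_⟩,
    rieszFunctional_nonneg_iff_posSemidef_hankel _⟩
  · simpa [eval_Ualpha, taylor_zero] using h p hp 0
  · rw [eval_Ualpha]
    exact h _ fun y => by rw [taylor_eval]; exact hp _
end

section
/- Let Φ : ℝ[x] → ℝ[x] be a linear operator that preserves the set of non-negative polynomials (i.e., for every p with p(x) ≥ 0 for all real x, also (Φ(p))(x) ≥ 0 for all real x). If Φ(1) is the zero polynomial, then Φ is the zero operator: Φ(p) = 0 for every p ∈ ℝ[x]. -/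
open Polynomial

theorem stmt_5 (Φ : Polynomial ℝ →ₗ[ℝ] Polynomial ℝ)
    (hpres : ∀ p : Polynomial ℝ, (∀ x : ℝ, 0 ≤ p.eval x) → ∀ x : ℝ, 0 ≤ (Φ p).eval x)
    (h1 : Φ 1 = 0) :
    ∀ p : Polynomial ℝ, Φ p = 0 := by
  have key : ∀ n : ℕ, Φ (X ^ n) = 0 := by
    intro n
    have hsq : ∀ t x : ℝ, 0 ≤ (Φ (X ^ (2 * n))).eval x + 2 * t * (Φ (X ^ n)).eval x := by
      intro t x
      have hnn : ∀ y : ℝ, 0 ≤ (((X : Polynomial ℝ) ^ n + C t) ^ 2).eval y := by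
        intro y
        rw [eval_pow]
        exact sq_nonneg _
      have hexp : ((X : Polynomial ℝ) ^ n + C t) ^ 2
          = X ^ (2 * n) + (2 * t) • X ^ n + (t ^ 2) • (1 : Polynomial ℝ) := by
        simp only [smul_eq_C_mul, C_mul, C_pow, pow_mul, map_ofNat]
        ring
      have h := hpres _ hnn x
      rw [hexp] at h
      simp only [map_add, map_smul, h1, smul_zero, add_zero, eval_add, eval_smul,
        smul_eq_mul] at h
      linarith
    apply Polynomial.funext
    intro x
    simp only [eval_zero]
    by_contra ha
    set a := (Φ (X ^ n)).eval x with ha'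
    have h := hsq (-((Φ (X ^ (2 * n))).eval x + 1) / (2 * a)) x
    have heq : 2 * (-((Φ (X ^ (2 * n))).eval x + 1) / (2 * a)) * a = -((Φ (X ^ (2 * n))).eval x + 1) := by
      field_simp
    rw [← ha'] at h
    rw [heq] at h
    linarith
  intro p
  induction p using Polynomial.induction_on' with
  | add p q hp hq => rw [map_add, hp, hq, add_zero]
  | monomial n a =>
      have : (monomial n a : Polynomial ℝ) = a • X ^ n := by
        rw [smul_eq_C_mul, C_mul_X_pow_eq_monomial]
      rw [this, map_smul, key, smul_zero]
end

section
/- Let Φ : ℝ[x] → ℝ[x] be a linear operator. Then the following two conditions are equivalent: (1) Φ preserves the set of elliptic polynomials (polynomials with no real roots); (2) either Φ preserves the set of positive polynomials or −Φ preserves the set of positive polynomials. Moreover, each of these conditions implies: (3) either Φ preserves the set of non-negative polynomials or −Φ preserves the set of non-negative polynomials. -/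
open Polynomial

private lemma signConst (p : Polynomial ℝ) (h : ∀ x, p.eval x ≠ 0) :
    (∀ x, 0 < p.eval x) ∨ (∀ x, p.eval x < 0) := by
  rcases lt_or_gt_of_ne (h 0) with h0 | h0
  · right
    intro x
    rcases lt_or_gt_of_ne (h x) with hx | hx
    · exact hx
    · exfalso
      obtain ⟨c, hc⟩ := intermediate_value_univ 0 x p.continuous ⟨le_of_lt h0, le_of_lt hx⟩
      exact h c hc
  · left
    intro x
    rcases lt_or_gt_of_ne (h x) with hx | hx
    · exfalso
      obtain ⟨c, hc⟩ := intermediate_value_univ x 0 p.continuous ⟨le_of_lt hx, le_of_lt h0⟩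
      exact h c hc
    · exact hx

private lemma combo (A B : ℝ) (hA : 0 < A) (hB : B < 0) :
    ∃ t : ℝ, 0 < t ∧ t < 1 ∧ t * A + (1 - t) * B = 0 := by
  have hAB : 0 < A - B := by linarith
  refine ⟨-B / (A - B), div_pos (by linarith) hAB, ?_, ?_⟩
  · rw [div_lt_one hAB]; linarith
  · field_simp
    ring

private lemma auxEps (v K : ℝ) (h : ∀ ε : ℝ, 0 < ε → 0 < v + ε * K) : 0 ≤ v := by
  by_contra hv
  push_neg at hv
  rcases le_or_gt K 0 with hK | hK
  · have h1 := h 1 one_pos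
    nlinarith
  · have h1 := h (-v / (2 * K)) (div_pos (by linarith) (by linarith))
    have h2 : -v / (2 * K) * K = -v / 2 := by
      field_simp
    rw [h2] at h1
    linarith

private lemma ellipOfPos (Ψ : Polynomial ℝ →ₗ[ℝ] Polynomial ℝ)
    (h : ∀ p : Polynomial ℝ, (∀ x, 0 < p.eval x) → ∀ x, 0 < (Ψ p).eval x) :
    ∀ p : Polynomial ℝ, (∀ x, p.eval x ≠ 0) → ∀ x, (Ψ p).eval x ≠ 0 := by
  intro p hp x
  rcases signConst p hp with hpos | hneg
  · exact (h p hpos x).ne'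
  · have hm : ∀ y, 0 < (-p).eval y := by
      intro y
      simp only [eval_neg, neg_pos]
      exact hneg y
    have h2 := h (-p) hm x
    rw [map_neg, eval_neg] at h2
    exact (neg_pos.mp h2).ne

private lemma nonnegOfPos (Ψ : Polynomial ℝ →ₗ[ℝ] Polynomial ℝ)
    (h : ∀ p : Polynomial ℝ, (∀ x, 0 < p.eval x) → ∀ x, 0 < (Ψ p).eval x) :
    ∀ p : Polynomial ℝ, (∀ x, 0 ≤ p.eval x) → ∀ x, 0 ≤ (Ψ p).eval x := by
  intro p hp x
  apply auxEps _ ((Ψ 1).eval x)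
  intro ε hε
  have hpos : ∀ y, 0 < (p + ε • 1).eval y := by
    intro y
    simp only [eval_add, eval_smul, eval_one, smul_eq_mul, mul_one]
    have := hp y
    linarith
  have h2 := h (p + ε • 1) hpos x
  rw [map_add, map_smul] at h2
  simpa only [eval_add, eval_smul, smul_eq_mul] using h2

theorem stmt_6 (Φ : Polynomial ℝ →ₗ[ℝ] Polynomial ℝ) :
    ((∀ p : Polynomial ℝ, (∀ x : ℝ, p.eval x ≠ 0) → ∀ x : ℝ, (Φ p).eval x ≠ 0) ↔
      ((∀ p : Polynomial ℝ, (∀ x : ℝ, 0 < p.eval x) → ∀ x : ℝ, 0 < (Φ p).eval x) ∨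
       (∀ p : Polynomial ℝ, (∀ x : ℝ, 0 < p.eval x) → ∀ x : ℝ, 0 < ((-Φ) p).eval x))) ∧
    ((∀ p : Polynomial ℝ, (∀ x : ℝ, p.eval x ≠ 0) → ∀ x : ℝ, (Φ p).eval x ≠ 0) →
      ((∀ p : Polynomial ℝ, (∀ x : ℝ, 0 ≤ p.eval x) → ∀ x : ℝ, 0 ≤ (Φ p).eval x) ∨
       (∀ p : Polynomial ℝ, (∀ x : ℝ, 0 ≤ p.eval x) → ∀ x : ℝ, 0 ≤ ((-Φ) p).eval x))) := by
  have hmain : (∀ p : Polynomial ℝ, (∀ x : ℝ, p.eval x ≠ 0) → ∀ x : ℝ, (Φ p).eval x ≠ 0) ↔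
      ((∀ p : Polynomial ℝ, (∀ x : ℝ, 0 < p.eval x) → ∀ x : ℝ, 0 < (Φ p).eval x) ∨
       (∀ p : Polynomial ℝ, (∀ x : ℝ, 0 < p.eval x) → ∀ x : ℝ, 0 < ((-Φ) p).eval x)) := by
    constructor
    · intro h1
      by_contra hcon
      push_neg at hcon
      obtain ⟨⟨p, hp, x0, hx0⟩, ⟨q, hq, y0, hy0⟩⟩ := hcon
      -- hx0 : (Φ p).eval x0 ≤ 0 ; hy0 : ((-Φ) q).eval y0 ≤ 0
      rw [LinearMap.neg_apply, eval_neg, neg_nonpos] at hy0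
      have hpe := h1 p (fun x => (hp x).ne')
      have hqe := h1 q (fun x => (hq x).ne')
      have hpneg : ∀ x, (Φ p).eval x < 0 := by
        rcases signConst _ hpe with h' | h'
        · exact absurd hx0 (not_le.mpr (h' x0))
        · exact h'
      have hqpos : ∀ x, 0 < (Φ q).eval x := by
        rcases signConst _ hqe with h' | h'
        · exact h'
        · exact absurd hy0 (not_le.mpr (h' y0))
      obtain ⟨t, ht0, ht1, htz⟩ := combo _ _ (hqpos 0) (hpneg 0)
      have hP : ∀ x, 0 < (t • q + (1 - t) • p).eval x := by
        intro x
        simp only [eval_add, eval_smul, smul_eq_mul]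
        have h1 := hp x
        have h2 := hq x
        nlinarith
      apply h1 _ (fun x => (hP x).ne') 0
      simp only [map_add, map_smul, eval_add, eval_smul, smul_eq_mul]
      exact htz
    · intro h2
      rcases h2 with h | h
      · exact ellipOfPos Φ h
      · intro p hp x
        have := ellipOfPos (-Φ) h p hp x
        rw [LinearMap.neg_apply, eval_neg, neg_ne_zero] at this
        exact this
  refine ⟨hmain, fun h1 => ?_⟩
  rcases hmain.mp h1 with h | h
  · exact Or.inl (nonnegOfPos Φ h)
  · exact Or.inr (nonnegOfPos (-Φ) h)
end

section
/- Let Φ : ℝ[x] → ℝ[x] be a linear operator such that the polynomial Φ(1) is positive, i.e., (Φ(1))(x) > 0 for all real x. Then the following are equivalent: (1) Φ preserves the set of elliptic polynomials; (2) either Φ or −Φ preserves the set of positive polynomials; (3) either Φ or −Φ preserves the set of non-negative polynomials. -/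
open Polynomial

private lemma sign_const (p : Polynomial ℝ) (hp : ∀ x : ℝ, p.eval x ≠ 0) :
    (∀ x : ℝ, 0 < p.eval x) ∨ (∀ x : ℝ, p.eval x < 0) := by
  by_contra h
  push_neg at h
  obtain ⟨⟨a, ha⟩, ⟨b, hb⟩⟩ := h
  have hc : Continuous fun x : ℝ => p.eval x := p.continuous
  obtain ⟨c, hc0⟩ := intermediate_value_univ a b hc ⟨ha, hb⟩
  exact hp c hc0

private lemma elliptic_to_pos (Φ : Polynomial ℝ →ₗ[ℝ] Polynomial ℝ)
    (h1 : ∀ x : ℝ, 0 < (Φ 1).eval x)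
    (hE : ∀ p : Polynomial ℝ, (∀ x : ℝ, p.eval x ≠ 0) → ∀ x : ℝ, (Φ p).eval x ≠ 0)
    (p : Polynomial ℝ) (hp : ∀ x : ℝ, 0 < p.eval x) (x : ℝ) : 0 < (Φ p).eval x := by
  set c := (Φ 1).eval x with hc
  set d := (Φ p).eval x with hd
  have key : ∀ t ∈ Set.Icc (0:ℝ) 1, (1 - t) * c + t * d ≠ 0 := by
    intro t ht
    have hq : ∀ y : ℝ, ((1 - t) • (1:Polynomial ℝ) + t • p).eval y ≠ 0 := by
      intro y
      have hev : ((1 - t) • (1:Polynomial ℝ) + t • p).eval y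
          = (1 - t) * 1 + t * p.eval y := by
        simp [smul_eq_mul]
      rw [hev]
      have h1t : 0 ≤ 1 - t := by linarith [ht.2]
      have hpos : 0 < (1 - t) * 1 + t * p.eval y := by
        rcases eq_or_lt_of_le ht.1 with h | h
        · simp [← h]
        · nlinarith [hp y]
      linarith
    have := hE _ hq x
    simpa [map_add, map_smul, smul_eq_mul, ← hc, ← hd] using this
  have hg : Continuous fun t : ℝ => (1 - t) * c + t * d := by continuity
  by_contra hdle
  push_neg at hdle
  have hc0 : 0 < c := h1 x
  have hdne : d ≠ 0 := by
    have := key 1 ⟨zero_le_one, le_refl 1⟩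
    simpa using this
  have hd' : d < 0 := lt_of_le_of_ne hdle hdne
  have h0 : (0:ℝ) ∈ Set.Icc ((fun t : ℝ => (1 - t) * c + t * d) 1)
      ((fun t : ℝ => (1 - t) * c + t * d) 0) := by
    constructor <;> simp <;> linarith
  obtain ⟨t, ht, ht0⟩ := intermediate_value_Icc' zero_le_one hg.continuousOn h0
  exact key t ht ht0

private lemma pos_to_elliptic (Φ : Polynomial ℝ →ₗ[ℝ] Polynomial ℝ)
    (hP : ∀ p : Polynomial ℝ, (∀ x : ℝ, 0 < p.eval x) → ∀ x : ℝ, 0 < (Φ p).eval x)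
    (p : Polynomial ℝ) (hp : ∀ x : ℝ, p.eval x ≠ 0) (x : ℝ) : (Φ p).eval x ≠ 0 := by
  rcases sign_const p hp with h | h
  · exact (hP p h x).ne'
  · have hneg : ∀ y : ℝ, 0 < (-p).eval y := by
      intro y; simpa using neg_pos.mpr (h y)
    have := hP (-p) hneg x
    rw [map_neg, eval_neg] at this
    linarith

private lemma pos_to_nonneg (Φ : Polynomial ℝ →ₗ[ℝ] Polynomial ℝ)
    (h1 : ∀ x : ℝ, 0 < (Φ 1).eval x)
    (hP : ∀ p : Polynomial ℝ, (∀ x : ℝ, 0 < p.eval x) → ∀ x : ℝ, 0 < (Φ p).eval x)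
    (p : Polynomial ℝ) (hp : ∀ x : ℝ, 0 ≤ p.eval x) (x : ℝ) : 0 ≤ (Φ p).eval x := by
  by_contra h
  push_neg at h
  have hc := h1 x
  have key : ∀ ε : ℝ, 0 < ε → 0 < (Φ p).eval x + ε * (Φ 1).eval x := by
    intro ε hε
    have hpos : ∀ y : ℝ, 0 < (p + C ε).eval y := by
      intro y; simp only [eval_add, eval_C]; linarith [hp y]
    have := hP _ hpos x
    have hCe : (C ε : Polynomial ℝ) = ε • (1 : Polynomial ℝ) := by
      rw [smul_eq_C_mul, mul_one]
    rw [hCe, map_add, map_smul, eval_add, eval_smul, smul_eq_mul] at this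
    linarith
  have hε : 0 < -(Φ p).eval x / (2 * (Φ 1).eval x) := div_pos (by linarith) (by linarith)
  have := key _ hε
  rw [div_mul_eq_mul_div, mul_comm (2 : ℝ), ← div_div] at this
  rw [mul_div_assoc, div_self hc.ne', mul_one] at this
  linarith

private lemma nonneg_to_pos (Φ : Polynomial ℝ →ₗ[ℝ] Polynomial ℝ)
    (h1 : ∀ x : ℝ, 0 < (Φ 1).eval x)
    (hN : ∀ p : Polynomial ℝ, (∀ x : ℝ, 0 ≤ p.eval x) → ∀ x : ℝ, 0 ≤ (Φ p).eval x)
    (p : Polynomial ℝ) (hp : ∀ x : ℝ, 0 < p.eval x) (x : ℝ) : 0 < (Φ p).eval x := by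
  obtain ⟨x₀, hx₀⟩ := p.exists_forall_norm_le
  set ε := p.eval x₀ with hεdef
  have hεpos : 0 < ε := hp x₀
  have hq : ∀ y : ℝ, 0 ≤ (p - C ε).eval y := by
    intro y
    have := hx₀ y
    rw [Real.norm_eq_abs, Real.norm_eq_abs, abs_of_pos (hp x₀), abs_of_pos (hp y)] at this
    simp only [eval_sub, eval_C]
    linarith
  have hN' := hN _ hq x
  have hCe : (C ε : Polynomial ℝ) = ε • (1 : Polynomial ℝ) := by
    rw [smul_eq_C_mul, mul_one]
  have hsplit : Φ p = Φ (p - C ε) + ε • Φ 1 := by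
    rw [← map_smul, ← map_add, ← hCe, sub_add_cancel]
  rw [hsplit, eval_add, eval_smul, smul_eq_mul]
  have := h1 x
  nlinarith

theorem stmt_8 (Φ : Polynomial ℝ →ₗ[ℝ] Polynomial ℝ)
    (h1 : ∀ x : ℝ, 0 < (Φ 1).eval x) :
    ((∀ p : Polynomial ℝ, (∀ x : ℝ, p.eval x ≠ 0) → ∀ x : ℝ, (Φ p).eval x ≠ 0) ↔
      ((∀ p : Polynomial ℝ, (∀ x : ℝ, 0 < p.eval x) → ∀ x : ℝ, 0 < (Φ p).eval x) ∨
       (∀ p : Polynomial ℝ, (∀ x : ℝ, 0 < p.eval x) → ∀ x : ℝ, 0 < ((-Φ) p).eval x))) ∧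
    (((∀ p : Polynomial ℝ, (∀ x : ℝ, 0 < p.eval x) → ∀ x : ℝ, 0 < (Φ p).eval x) ∨
      (∀ p : Polynomial ℝ, (∀ x : ℝ, 0 < p.eval x) → ∀ x : ℝ, 0 < ((-Φ) p).eval x)) ↔
     ((∀ p : Polynomial ℝ, (∀ x : ℝ, 0 ≤ p.eval x) → ∀ x : ℝ, 0 ≤ (Φ p).eval x) ∨
      (∀ p : Polynomial ℝ, (∀ x : ℝ, 0 ≤ p.eval x) → ∀ x : ℝ, 0 ≤ ((-Φ) p).eval x))) := by
  have hone : ∀ x : ℝ, 0 < (1 : Polynomial ℝ).eval x := by simp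
  have hnegΦ : ¬ (∀ p : Polynomial ℝ, (∀ x : ℝ, 0 < p.eval x) →
      ∀ x : ℝ, 0 < ((-Φ) p).eval x) := by
    intro h
    have := h 1 hone 0
    simp only [LinearMap.neg_apply, eval_neg] at this
    linarith [h1 0]
  have hnegΦ' : ¬ (∀ p : Polynomial ℝ, (∀ x : ℝ, 0 ≤ p.eval x) →
      ∀ x : ℝ, 0 ≤ ((-Φ) p).eval x) := by
    intro h
    have := h 1 (fun x => (hone x).le) 0
    simp only [LinearMap.neg_apply, eval_neg] at this
    linarith [h1 0]
  constructor
  · constructor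
    · intro hE
      exact Or.inl (elliptic_to_pos Φ h1 hE)
    · rintro (hP | hP)
      · exact pos_to_elliptic Φ hP
      · exact absurd hP hnegΦ
  · constructor
    · rintro (hP | hP)
      · exact Or.inl (pos_to_nonneg Φ h1 hP)
      · exact absurd hP hnegΦ
    · rintro (hN | hN)
      · exact Or.inl (nonneg_to_pos Φ h1 hN)
      · exact absurd hN hnegΦ'
end

section
/- Let n be a positive integer and let Φ be a linear operator on the space ℝ_n[x] of real polynomials of degree at most n, mapping ℝ_n[x] to itself, such that Φ(1) is positive (i.e., (Φ(1))(x) > 0 for all real x). Then the following are equivalent: (1) Φ preserves the set of elliptic polynomials of degree ≤ n; (2) either Φ or −Φ preserves the set of positive polynomials of degree ≤ n; (3) either Φ or −Φ preserves the set of non-negative polynomials of degree ≤ n. -/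
/-!
The three conditions are linked by perturbing with constants, using `Φ 1 > 0`. If `Φ p` took a
negative value at `x` for some `p ≥ 0`, then adding the right constant `ε > 0` gives a positive
`p + ε` with `Φ (p + ε)` vanishing at `x`; so preserving elliptic polynomials forces preserving
non-negative ones. A positive polynomial attains a minimum `m > 0`, so `p - m ≥ 0` and
`Φ p ≥ m Φ 1 > 0`. Finally, an elliptic polynomial has constant sign by the intermediate value
theorem, so preserving positive polynomials gives preserving elliptic ones. The alternatives with
`-Φ` are excluded by evaluating at `1`.
-/

open Polynomial

namespace Polynomial

def IsPos (p : ℝ[X]) : Prop := ∀ x, 0 < p.eval x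

def IsNonneg (p : ℝ[X]) : Prop := ∀ x, 0 ≤ p.eval x

def IsElliptic (p : ℝ[X]) : Prop := ∀ x, p.eval x ≠ 0

def PreservesOn (n : ℕ) (P : ℝ[X] → Prop) (Φ : ℝ[X] →ₗ[ℝ] ℝ[X]) : Prop :=
  ∀ p : ℝ[X], p.natDegree ≤ n → P p → P (Φ p)

section Sign

variable {p : ℝ[X]}

theorem IsPos.isElliptic (hp : IsPos p) : IsElliptic p := fun x => (hp x).ne'

@[simp]
theorem isElliptic_neg : IsElliptic (-p) ↔ IsElliptic p := by
  simp only [IsElliptic, eval_neg, neg_ne_zero]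

theorem IsPos.not_isNonneg_neg (hp : IsPos p) : ¬ IsNonneg (-p) := fun h => by
  linarith [hp 0, h 0, eval_neg (p := p) (x := 0)]

theorem IsElliptic.isPos_or_isPos_neg (hp : IsElliptic p) : IsPos p ∨ IsPos (-p) := by
  unfold IsPos
  by_contra! h
  obtain ⟨⟨a, ha⟩, b, hb⟩ := h
  rw [eval_neg, neg_nonpos] at hb
  obtain ⟨c, hc⟩ := intermediate_value_univ a b p.continuous ⟨ha, hb⟩
  exact hp c hc

theorem IsPos.exists_pos_le_eval (hp : IsPos p) : ∃ m > 0, ∀ x, m ≤ p.eval x := by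
  obtain ⟨x₀, hx₀⟩ := p.exists_forall_norm_le
  refine ⟨p.eval x₀, hp x₀, fun x => ?_⟩
  simpa only [Real.norm_of_nonneg (hp _).le] using hx₀ x

end Sign

section Preserves

variable {n : ℕ} {Φ : ℝ[X] →ₗ[ℝ] ℝ[X]}

theorem natDegree_add_smul_one_le {p : ℝ[X]} (hp : p.natDegree ≤ n) (c : ℝ) :
    (p + c • 1).natDegree ≤ n :=
  natDegree_add_le_of_degree_le hp ((natDegree_smul_le c 1).trans (by simp))

theorem eval_map_add_smul_one (p : ℝ[X]) (c x : ℝ) :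
    (Φ (p + c • 1)).eval x = (Φ p).eval x + c * (Φ 1).eval x := by
  simp only [map_add, map_smul, eval_add, eval_smul, smul_eq_mul]

theorem PreservesOn.isElliptic_of_isPos (h : PreservesOn n IsPos Φ) :
    PreservesOn n IsElliptic Φ := by
  intro p hp hell
  rcases hell.isPos_or_isPos_neg with hpos | hneg
  · exact (h p hp hpos).isElliptic
  · simpa using (h (-p) (by rwa [natDegree_neg]) hneg).isElliptic

theorem PreservesOn.isNonneg_of_isElliptic (h1 : IsPos (Φ 1)) (h : PreservesOn n IsElliptic Φ) :
    PreservesOn n IsNonneg Φ := by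
  intro p hp hnn x
  by_contra! hx
  -- `ε` is chosen so that `Φ (p + ε)` vanishes at `x`.
  set ε := -(Φ p).eval x / (Φ 1).eval x
  have hε : 0 < ε := div_pos (neg_pos.mpr hx) (h1 x)
  have hell : IsElliptic (p + ε • 1) := fun y => by
    simp only [eval_add, eval_smul, eval_one, smul_eq_mul, mul_one]
    linarith [hnn y]
  apply h _ (natDegree_add_smul_one_le hp ε) hell x
  rw [eval_map_add_smul_one, div_mul_cancel₀ _ (h1 x).ne', add_neg_cancel]

theorem PreservesOn.isPos_of_isNonneg (h1 : IsPos (Φ 1)) (h : PreservesOn n IsNonneg Φ) :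
    PreservesOn n IsPos Φ := by
  intro p hp hpos x
  obtain ⟨m, hm, hmp⟩ := hpos.exists_pos_le_eval
  have hnn : IsNonneg (p + (-m) • 1) := fun y => by
    simp only [eval_add, eval_smul, eval_one, smul_eq_mul, mul_one]
    linarith [hmp y]
  have := h _ (natDegree_add_smul_one_le hp (-m)) hnn x
  rw [eval_map_add_smul_one] at this
  nlinarith [h1 x]

theorem not_preservesOn_neg_isNonneg (h1 : IsPos (Φ 1)) : ¬ PreservesOn n IsNonneg (-Φ) :=
  fun h => h1.not_isNonneg_neg (h 1 (by simp) fun _ => by simp)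

theorem not_preservesOn_neg_isPos (h1 : IsPos (Φ 1)) : ¬ PreservesOn n IsPos (-Φ) :=
  fun h => h1.not_isNonneg_neg fun x => (h 1 (by simp) (fun _ => by simp) x).le

end Preserves

end Polynomial

theorem stmt_9_general (n : ℕ) (Φ : Polynomial ℝ →ₗ[ℝ] Polynomial ℝ)
    (h1 : ∀ x : ℝ, 0 < (Φ 1).eval x) :
    ((∀ p : Polynomial ℝ, p.natDegree ≤ n → (∀ x : ℝ, p.eval x ≠ 0) →
        ∀ x : ℝ, (Φ p).eval x ≠ 0) ↔
      ((∀ p : Polynomial ℝ, p.natDegree ≤ n → (∀ x : ℝ, 0 < p.eval x) →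
          ∀ x : ℝ, 0 < (Φ p).eval x) ∨
       (∀ p : Polynomial ℝ, p.natDegree ≤ n → (∀ x : ℝ, 0 < p.eval x) →
          ∀ x : ℝ, 0 < ((-Φ) p).eval x))) ∧
    (((∀ p : Polynomial ℝ, p.natDegree ≤ n → (∀ x : ℝ, 0 < p.eval x) →
          ∀ x : ℝ, 0 < (Φ p).eval x) ∨
      (∀ p : Polynomial ℝ, p.natDegree ≤ n → (∀ x : ℝ, 0 < p.eval x) →
          ∀ x : ℝ, 0 < ((-Φ) p).eval x)) ↔
     ((∀ p : Polynomial ℝ, p.natDegree ≤ n → (∀ x : ℝ, 0 ≤ p.eval x) →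
          ∀ x : ℝ, 0 ≤ (Φ p).eval x) ∨
      (∀ p : Polynomial ℝ, p.natDegree ≤ n → (∀ x : ℝ, 0 ≤ p.eval x) →
          ∀ x : ℝ, 0 ≤ ((-Φ) p).eval x))) := by
  change (PreservesOn n IsElliptic Φ ↔ PreservesOn n IsPos Φ ∨ PreservesOn n IsPos (-Φ)) ∧
    (PreservesOn n IsPos Φ ∨ PreservesOn n IsPos (-Φ) ↔
      PreservesOn n IsNonneg Φ ∨ PreservesOn n IsNonneg (-Φ))
  rw [or_iff_left (not_preservesOn_neg_isPos h1), or_iff_left (not_preservesOn_neg_isNonneg h1)]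
  have pos_of_nonneg := PreservesOn.isPos_of_isNonneg (n := n) h1
  have nonneg_of_elliptic := PreservesOn.isNonneg_of_isElliptic (n := n) h1
  exact ⟨⟨fun h => pos_of_nonneg (nonneg_of_elliptic h), PreservesOn.isElliptic_of_isPos⟩,
    ⟨fun h => nonneg_of_elliptic h.isElliptic_of_isPos, pos_of_nonneg⟩⟩

theorem stmt_9 (n : ℕ) (hn : 0 < n) (Φ : Polynomial ℝ →ₗ[ℝ] Polynomial ℝ)
    (hmap : ∀ p : Polynomial ℝ, p.natDegree ≤ n → (Φ p).natDegree ≤ n)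
    (h1 : ∀ x : ℝ, 0 < (Φ 1).eval x) :
    ((∀ p : Polynomial ℝ, p.natDegree ≤ n → (∀ x : ℝ, p.eval x ≠ 0) →
        ∀ x : ℝ, (Φ p).eval x ≠ 0) ↔
      ((∀ p : Polynomial ℝ, p.natDegree ≤ n → (∀ x : ℝ, 0 < p.eval x) →
          ∀ x : ℝ, 0 < (Φ p).eval x) ∨
       (∀ p : Polynomial ℝ, p.natDegree ≤ n → (∀ x : ℝ, 0 < p.eval x) →
          ∀ x : ℝ, 0 < ((-Φ) p).eval x))) ∧
    (((∀ p : Polynomial ℝ, p.natDegree ≤ n → (∀ x : ℝ, 0 < p.eval x) →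
          ∀ x : ℝ, 0 < (Φ p).eval x) ∨
      (∀ p : Polynomial ℝ, p.natDegree ≤ n → (∀ x : ℝ, 0 < p.eval x) →
          ∀ x : ℝ, 0 < ((-Φ) p).eval x)) ↔
     ((∀ p : Polynomial ℝ, p.natDegree ≤ n → (∀ x : ℝ, 0 ≤ p.eval x) →
          ∀ x : ℝ, 0 ≤ (Φ p).eval x) ∨
      (∀ p : Polynomial ℝ, p.natDegree ≤ n → (∀ x : ℝ, 0 ≤ p.eval x) →
          ∀ x : ℝ, 0 ≤ ((-Φ) p).eval x))) :=
  stmt_9_general n Φ h1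
end

section
/- Let (λ_i)_{i≥0} be a sequence of real numbers and let T : ℝ[x] → ℝ[x] be the diagonal linear operator determined by T(x^i) = λ_i·x^i for all i ≥ 0. If T preserves the set of positive polynomials (for every p with p(x) > 0 for all real x, also (T(p))(x) > 0 for all real x), then: (1) λ_i ≥ 0 for every even i; and (2) λ_i² ≤ λ_0·λ_{2i} for every i ≥ 0. -/
/-!
A positivity preserver also preserves nonnegativity: if `p ≥ 0` then `p + ε > 0` for every `ε > 0`,
and letting `ε → 0` in `T (p + ε) = T p + ε • T 1` gives `T p ≥ 0`. Evaluating `T` at `1` on the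
nonnegative polynomials `(X ^ k + c) ^ 2 = X ^ (2 * k) + 2 c X ^ k + c ^ 2` shows that the quadratic
`λ₀ c² + 2 λₖ c + λ₂ₖ` is nonnegative in `c`: its value at `c = 0` gives (1), its discriminant (2).
-/

open Polynomial Filter Topology

lemma nonneg_of_forall_pos_add_mul {a b : ℝ} (h : ∀ ε > 0, 0 < a + ε * b) : 0 ≤ a := by
  have hcont : Continuous fun ε : ℝ => a + ε * b := by fun_prop
  have hlim : Tendsto (fun ε => a + ε * b) (𝓝[>] 0) (𝓝 a) := by
    simpa using (hcont.tendsto 0).mono_left nhdsWithin_le_nhds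
  exact ge_of_tendsto hlim (eventually_nhdsWithin_of_forall fun ε hε => (h ε hε).le)

lemma eval_nonneg_of_preserves_pos {T : ℝ[X] →ₗ[ℝ] ℝ[X]}
    (hpres : ∀ p : ℝ[X], (∀ x : ℝ, 0 < p.eval x) → ∀ x : ℝ, 0 < (T p).eval x)
    {p : ℝ[X]} (hp : ∀ x : ℝ, 0 ≤ p.eval x) (x : ℝ) : 0 ≤ (T p).eval x := by
  refine nonneg_of_forall_pos_add_mul (b := (T 1).eval x) fun ε hε => ?_
  have hpos : ∀ y : ℝ, 0 < (p + ε • 1).eval y := fun y => by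
    simpa using add_pos_of_nonneg_of_pos (hp y) hε
  simpa using hpres _ hpos x

lemma diagonal_quadratic_nonneg {lam : ℕ → ℝ} {T : ℝ[X] →ₗ[ℝ] ℝ[X]}
    (hT : ∀ i : ℕ, T (X ^ i) = lam i • X ^ i)
    (hpres : ∀ p : ℝ[X], (∀ x : ℝ, 0 < p.eval x) → ∀ x : ℝ, 0 < (T p).eval x) (k : ℕ) (c : ℝ) :
    0 ≤ lam 0 * (c * c) + 2 * lam k * c + lam (2 * k) := by
  set p : ℝ[X] := X ^ (2 * k) + (2 * c) • X ^ k + (c * c) • X ^ 0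
  have hp : ∀ x : ℝ, 0 ≤ p.eval x := fun x => by
    have hsq : p.eval x = (x ^ k + c) ^ 2 := by
      simp only [p, eval_add, eval_smul, eval_pow, eval_X, smul_eq_mul]
      ring
    exact hsq ▸ sq_nonneg _
  have h := eval_nonneg_of_preserves_pos hpres hp 1
  simp only [p, map_add, map_smul, hT, eval_add, eval_smul, eval_pow, eval_X, one_pow,
    smul_eq_mul] at h
  linarith

theorem stmt_10 (lam : ℕ → ℝ) (T : Polynomial ℝ →ₗ[ℝ] Polynomial ℝ)
    (hT : ∀ i : ℕ, T (Polynomial.X ^ i) = lam i • Polynomial.X ^ i)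
    (hpres : ∀ p : Polynomial ℝ, (∀ x : ℝ, 0 < p.eval x) → ∀ x : ℝ, 0 < (T p).eval x) :
    (∀ i : ℕ, Even i → 0 ≤ lam i) ∧ (∀ i : ℕ, (lam i) ^ 2 ≤ lam 0 * lam (2 * i)) := by
  have hquad := diagonal_quadratic_nonneg hT hpres
  refine ⟨fun i ⟨k, hk⟩ => ?_, fun i => ?_⟩
  · simpa [hk, ← two_mul] using hquad k 0
  · have hdisc := discrim_le_zero (hquad i)
    rw [discrim] at hdisc
    linarith
end

section
/- Let T_4 be the diagonal linear operator on the space ℝ_4[x] of real polynomials of degree at most 4 defined by T_4(x^i) = λ_i·x^i with (λ_0, λ_1, λ_2, λ_3, λ_4) = (1/29, 1/68, 1/123, 1/200, 1/305). Then T_4 preserves the set of positive polynomials in ℝ_4[x], i.e., for every p of degree ≤ 4 with p(x) > 0 for all real x, (T_4(p))(x) > 0 for all real x; but its inverse does not preserve hyperbolicity: the polynomial (x+1)^4 is hyperbolic (all its complex roots are real), while its preimage T_4^{−1}((x+1)^4) = 305x^4 + 800x^3 + 738x^2 + 272x + 29 has a non-real complex root. -/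
open Polynomial

/-- The diagonal sequence `(1/29, 1/68, 1/123, 1/200, 1/305)`. -/
noncomputable def lam13 : ℕ → ℝ
  | 0 => 1 / 29
  | 1 => 1 / 68
  | 2 => 1 / 123
  | 3 => 1 / 200
  | 4 => 1 / 305
  | _ => 0

/-- The diagonal transformation `T₄` on `ℝ_4[x]` associated to `lam13`. -/
noncomputable def T4 (p : Polynomial ℝ) : Polynomial ℝ :=
  ∑ i ∈ Finset.range 5, (lam13 i * p.coeff i) • Polynomial.X ^ i

/-!
Positivity: `(λ_i)` is the moment sequence `λ_i = ∑ w_j t_j ^ i` of a discrete measure with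
positive weights, so `(T₄ p)(x) = ∑ w_j p(t_j x)` is positive whenever `p` is.
Hyperbolicity: the preimage of `(x + 1)^4` factors as `(x + 1)(305x³ + 495x² + 243x + 29)`,
and the cubic factor has negative discriminant, so two of its roots are non-real.
-/

namespace Polynomial

noncomputable def diagonalTransform {R : Type*} [Semiring R] (μ : ℕ → R) (n : ℕ) (p : R[X]) :
    R[X] :=
  ∑ i ∈ Finset.range (n + 1), (μ i * p.coeff i) • X ^ i

theorem eval_diagonalTransform_eq_sum {R ι : Type*} [CommSemiring R] {μ : ℕ → R} {n : ℕ}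
    {s : Finset ι} {w t : ι → R} (hμ : ∀ i ≤ n, μ i = ∑ j ∈ s, w j * t j ^ i)
    {p : R[X]} (hp : p.natDegree ≤ n) (x : R) :
    (diagonalTransform μ n p).eval x = ∑ j ∈ s, w j * p.eval (t j * x) := by
  simp only [diagonalTransform, eval_finsetSum, eval_smul, eval_pow, eval_X, smul_eq_mul,
    eval_eq_sum_range' (Nat.lt_succ_of_le hp), Finset.mul_sum]
  rw [Finset.sum_comm]
  refine Finset.sum_congr rfl fun i hi => ?_
  rw [hμ i (Nat.lt_succ_iff.mp (Finset.mem_range.mp hi)), Finset.sum_mul, Finset.sum_mul]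
  refine Finset.sum_congr rfl fun j _ => ?_
  ring

theorem eval_diagonalTransform_pos {ι : Type*} {μ : ℕ → ℝ} {n : ℕ}
    {s : Finset ι} {w t : ι → ℝ} (hμ : ∀ i ≤ n, μ i = ∑ j ∈ s, w j * t j ^ i)
    (hs : s.Nonempty) (hw : ∀ j ∈ s, 0 < w j)
    {p : ℝ[X]} (hp : p.natDegree ≤ n) (hpos : ∀ x, 0 < p.eval x) (x : ℝ) :
    0 < (diagonalTransform μ n p).eval x := by
  rw [eval_diagonalTransform_eq_sum hμ hp]
  exact Finset.sum_pos (fun j hj => mul_pos (hw j hj) (hpos _)) hs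

end Polynomial

theorem Cubic.exists_root_im_ne_zero_of_discr_neg {P : Cubic ℝ} (ha : P.a ≠ 0)
    (hd : P.discr < 0) : ∃ z : ℂ, aeval z P.toPoly = 0 ∧ z.im ≠ 0 := by
  by_contra! hreal
  obtain ⟨x, y, z, h3⟩ := (splits_iff_roots_eq_three (φ := Complex.ofRealHom) ha).mp
    (IsAlgClosed.splits _)
  have hre : ∀ r ∈ (map Complex.ofRealHom P).roots, (r.re : ℂ) = r := fun r hr =>
    Complex.ext rfl (by
      rw [map_roots, mem_roots (map_ne_zero (ne_zero_of_a_ne_zero ha)), IsRoot, eval_map] at hr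
      simp [hreal r hr])
  have hdiscr := discr_eq_prod_three_roots (φ := Complex.ofRealHom) ha h3
  rw [← hre x (by simp [h3]), ← hre y (by simp [h3]), ← hre z (by simp [h3])] at hdiscr
  have hsq : P.discr = (P.a * P.a * (x.re - y.re) * (x.re - z.re) * (y.re - z.re)) ^ 2 := by
    simp only [Complex.ofRealHom_eq_coe] at hdiscr
    exact_mod_cast hdiscr
  exact hd.not_ge (hsq ▸ sq_nonneg _)

theorem T4_eq_diagonalTransform : T4 = diagonalTransform lam13 4 := rfl

noncomputable def lam13Nodes : Fin 5 → ℝ := ![-1/2, -3/10, 1/5, 1/2, 7/10]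

-- The nodes are chosen by hand; the weights solve the Vandermonde system `lam13_eq_moment`.
noncomputable def lam13Weights : Fin 5 → ℝ :=
  ![150827/2485713888, 202607/1183673280, 6064729/388392795, 4902535/710203968,
    20832023/1775509920]

theorem lam13Weights_pos (j : Fin 5) : 0 < lam13Weights j := by
  fin_cases j <;> norm_num [lam13Weights]

theorem lam13_eq_moment : ∀ i ≤ 4, lam13 i = ∑ j, lam13Weights j * lam13Nodes j ^ i := by
  intro i hi
  interval_cases i <;> simp [lam13, lam13Weights, lam13Nodes, Fin.sum_univ_five] <;> norm_num

theorem T4_preimage :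
    T4 (305 * X ^ 4 + 800 * X ^ 3 + 738 * X ^ 2 + 272 * X + 29) = (X + 1) ^ 4 := by
  norm_num [T4, Finset.sum_range_succ, lam13, coeff_X]
  simp only [smul_eq_C_mul, map_ofNat]
  ring

noncomputable def preimageCubicFactor : Cubic ℝ := ⟨305, 495, 243, 29⟩

theorem preimage_eq_mul_cubicFactor :
    (305 * X ^ 4 + 800 * X ^ 3 + 738 * X ^ 2 + 272 * X + 29 : ℝ[X]) =
      (X + 1) * preimageCubicFactor.toPoly := by
  simp only [preimageCubicFactor, Cubic.toPoly, map_ofNat]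
  ring

theorem preimageCubicFactor_discr_neg : preimageCubicFactor.discr < 0 := by
  norm_num [preimageCubicFactor, Cubic.discr]

theorem stmt_13 :
    (∀ p : Polynomial ℝ, p.natDegree ≤ 4 → (∀ x : ℝ, 0 < p.eval x) →
      ∀ x : ℝ, 0 < (T4 p).eval x) ∧
    (∀ z : ℂ, Polynomial.aeval z (((Polynomial.X + 1) ^ 4 : Polynomial ℝ)) = 0 → z.im = 0) ∧
    T4 (305 * Polynomial.X ^ 4 + 800 * Polynomial.X ^ 3 + 738 * Polynomial.X ^ 2 +
        272 * Polynomial.X + 29) = (Polynomial.X + 1) ^ 4 ∧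
    (∃ z : ℂ, Polynomial.aeval z ((305 * Polynomial.X ^ 4 + 800 * Polynomial.X ^ 3 +
        738 * Polynomial.X ^ 2 + 272 * Polynomial.X + 29 : Polynomial ℝ)) = 0 ∧ z.im ≠ 0) := by
  refine ⟨fun p hp hpos x => ?_, fun z hz => ?_, T4_preimage, ?_⟩
  · rw [T4_eq_diagonalTransform]
    exact eval_diagonalTransform_pos lam13_eq_moment Finset.univ_nonempty
      (fun j _ => lam13Weights_pos j) hp hpos x
  · have hz' : z + 1 = 0 := pow_eq_zero_iff four_ne_zero |>.mp (by simpa using hz)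
    simp [eq_neg_of_add_eq_zero_left hz']
  · obtain ⟨z, hz, him⟩ := preimageCubicFactor.exists_root_im_ne_zero_of_discr_neg
      (by norm_num [preimageCubicFactor]) preimageCubicFactor_discr_neg
    exact ⟨z, by rw [preimage_eq_mul_cubicFactor, map_mul, hz, mul_zero], him⟩
end

section
/- Fix a positive integer k and let p(x) = (x − x_1)²·(x − x_2)²⋯(x − x_k)², regarded as a polynomial in x depending on real parameters x_1, …, x_k. For real x with x ≠ x_j for all j, set u_l = σ_l(1/(x − x_1), …, 1/(x − x_k)) for l = 1, …, k, where σ_l is the l-th elementary symmetric polynomial, and set w_l = p^(l)(x)/p(x). Then for every l = 1, …, k there exists a real polynomial g_l in l−1 variables (with g_1 ≡ 0) such that for all admissible x, x_1, …, x_k one has w_l = 2·l!·u_l + g_l(u_1, …, u_{l−1}). -/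
open Polynomial

noncomputable def Usum {k : ℕ} (xs : Fin k → ℝ) (x : ℝ) (m : ℕ) : ℝ :=
  ∑ t ∈ Finset.univ.powersetCard m, ∏ j ∈ t, (x - xs j)⁻¹

lemma Usum_def {k : ℕ} (xs : Fin k → ℝ) (x : ℝ) (m : ℕ) :
    Usum xs x m = ∑ t ∈ Finset.univ.powersetCard m, ∏ j ∈ t, (x - xs j)⁻¹ := rfl

lemma Usum_zero {k : ℕ} (xs : Fin k → ℝ) (x : ℝ) : Usum xs x 0 = 1 := by
  simp [Usum]

lemma key_eval {k : ℕ} (xs : Fin k → ℝ) (x : ℝ) (hx : ∀ j, x ≠ xs j) (m : ℕ) (hm : m ≤ k) :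
    (derivative^[m] (∏ j : Fin k, (X - C (xs j)))).eval x
      = (m.factorial : ℝ) * ((∏ j, (x - xs j)) * Usum xs x m) := by
  rw [Usum_def]
  have h1 : derivative^[m] (∏ j : Fin k, (X - C (xs j)))
      = m.factorial • hasseDeriv m (∏ j : Fin k, (X - C (xs j))) := by
    rw [← factorial_smul_hasseDeriv]; rfl
  have h2 : taylor x (∏ j : Fin k, (X - C (xs j))) = ∏ j : Fin k, (X + C (x - xs j)) := by
    rw [show (taylor x (∏ j : Fin k, (X - C (xs j))))
        = taylorAlgHom x (∏ j : Fin k, (X - C (xs j))) from rfl, map_prod]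
    refine Finset.prod_congr rfl fun j _ => ?_
    simp [taylorAlgHom_apply, map_sub, taylor_X, taylor_C, C_sub]
    ring
  have h3 : (hasseDeriv m (∏ j : Fin k, (X - C (xs j)))).eval x
      = ∑ t ∈ Finset.univ.powersetCard (k - m), ∏ j ∈ t, (x - xs j) := by
    rw [← taylor_coeff, h2, Finset.prod_X_add_C_coeff _ _ (by simpa using hm)]
    simp
  have h4 : ∑ t ∈ Finset.univ.powersetCard (k - m), ∏ j ∈ t, (x - xs j)
      = (∏ j, (x - xs j)) * ∑ t ∈ Finset.univ.powersetCard m, ∏ j ∈ t, (x - xs j)⁻¹ := by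
    rw [Finset.mul_sum]
    refine Finset.sum_nbij' (fun t => tᶜ) (fun t => tᶜ) ?_ ?_ ?_ ?_ ?_
    · intro t ht
      simp only [Finset.mem_powersetCard_univ, Finset.card_compl, Fintype.card_fin] at ht ⊢
      omega
    · intro t ht
      simp only [Finset.mem_powersetCard_univ, Finset.card_compl, Fintype.card_fin] at ht ⊢
      omega
    · intro t _; simp
    · intro t _; simp
    · intro t ht
      have hne : (∏ j ∈ tᶜ, (x - xs j)) ≠ 0 :=
        Finset.prod_ne_zero_iff.mpr fun j _ => sub_ne_zero.mpr (hx j)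
      rw [show (∏ j, (x - xs j)) = (∏ j ∈ tᶜ, (x - xs j)) * ∏ j ∈ t, (x - xs j) from
        (Finset.prod_compl_mul_prod t _).symm, Finset.prod_inv_distrib,
        mul_comm ((∏ j ∈ tᶜ, (x - xs j))), mul_assoc, mul_inv_cancel₀ hne, mul_one]
  rw [h1, nsmul_eq_mul, eval_mul, eval_natCast, h3, h4]

theorem stmt_14 (k : ℕ) (hk : 1 ≤ k) :
    ∀ l : ℕ, 1 ≤ l → l ≤ k →
      ∃ g : MvPolynomial (Fin (l - 1)) ℝ,
        (l = 1 → g = 0) ∧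
        ∀ (x : ℝ) (xs : Fin k → ℝ), (∀ j : Fin k, x ≠ xs j) →
          (Polynomial.derivative^[l]
              (∏ j : Fin k, (Polynomial.X - Polynomial.C (xs j)) ^ 2)).eval x /
            (∏ j : Fin k, (Polynomial.X - Polynomial.C (xs j)) ^ 2).eval x =
          2 * (l.factorial : ℝ) *
            (∑ t ∈ Finset.univ.powersetCard l, ∏ j ∈ t, (x - xs j)⁻¹) +
          MvPolynomial.eval
            (fun i : Fin (l - 1) =>
              ∑ t ∈ Finset.univ.powersetCard ((i : ℕ) + 1), ∏ j ∈ t, (x - xs j)⁻¹) g := by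
  intro l hl1 hlk
  obtain ⟨l', rfl⟩ : ∃ l', l = l' + 1 := ⟨l - 1, by omega⟩
  rw [show l' + 1 - 1 = l' from rfl]
  refine ⟨MvPolynomial.C ((l' + 1).factorial : ℝ) *
    ∑ i : Fin l', MvPolynomial.X i * MvPolynomial.X ⟨l' - 1 - (i : ℕ), by
      have := i.isLt; omega⟩, ?_, ?_⟩
  · intro h
    have : l' = 0 := by omega
    subst this
    simp
  · intro x xs hx
    simp only [← Usum_def]
    have hPne : (∏ j, (x - xs j)) ≠ 0 :=
      Finset.prod_ne_zero_iff.mpr fun j _ => sub_ne_zero.mpr (hx j)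
    have hqq : (∏ j : Fin k, (X - C (xs j)) ^ 2)
        = (∏ j : Fin k, (X - C (xs j))) * (∏ j : Fin k, (X - C (xs j))) := by
      rw [Finset.prod_pow, sq]
    have hdenom : (∏ j : Fin k, (X - C (xs j)) ^ 2).eval x = (∏ j, (x - xs j)) ^ 2 := by
      rw [eval_prod]
      simp only [eval_pow, eval_sub, eval_X, eval_C]
      rw [Finset.prod_pow]
    have hnum : (derivative^[l' + 1] (∏ j : Fin k, (X - C (xs j)) ^ 2)).eval x
        = (∑ m ∈ Finset.range (l' + 2),
            ((l' + 1).factorial : ℝ) * (Usum xs x (l' + 1 - m) * Usum xs x m))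
          * (∏ j, (x - xs j)) ^ 2 := by
      rw [hqq, Polynomial.iterate_derivative_mul, eval_finset_sum, Finset.sum_mul]
      refine Finset.sum_congr rfl fun m hm => ?_
      have hm' : m ≤ l' + 1 := by
        have := Finset.mem_range.mp hm; omega
      rw [eval_smul, eval_mul, key_eval xs x hx (l' + 1 - m) (by omega),
        key_eval xs x hx m (by omega), nsmul_eq_mul]
      have hc : ((l' + 1).choose m : ℝ) * (m.factorial : ℝ) * ((l' + 1 - m).factorial : ℝ)
          = ((l' + 1).factorial : ℝ) := by
        exact_mod_cast Nat.choose_mul_factorial_mul_factorial hm'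
      linear_combination ((∏ j, (x - xs j)) ^ 2 * Usum xs x (l' + 1 - m) * Usum xs x m) * hc
    rw [hnum, hdenom, mul_div_cancel_right₀ _ (pow_ne_zero 2 hPne)]
    have hg : MvPolynomial.eval (fun i : Fin l' => Usum xs x ((i : ℕ) + 1))
        (MvPolynomial.C ((l' + 1).factorial : ℝ) *
          ∑ i : Fin l', MvPolynomial.X i * MvPolynomial.X ⟨l' - 1 - (i : ℕ), by
            have := i.isLt; omega⟩)
        = ((l' + 1).factorial : ℝ) *
          ∑ i : Fin l', Usum xs x ((i : ℕ) + 1) * Usum xs x (l' - (i : ℕ)) := by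
      simp only [map_mul, MvPolynomial.eval_C, map_sum, MvPolynomial.eval_X]
      congr 1
      refine Finset.sum_congr rfl fun i _ => ?_
      have := i.isLt
      congr 2
      omega
    rw [hg]
    rw [Finset.sum_range_succ, Finset.sum_range_succ']
    simp only [Nat.sub_self, Usum_zero, Nat.sub_zero]
    rw [Fin.sum_univ_eq_sum_range (fun i => Usum xs x (i + 1) * Usum xs x (l' - i)) l']
    rw [Finset.mul_sum]
    have hcong : ∀ i ∈ Finset.range l',
        ((l' + 1).factorial : ℝ) * (Usum xs x (l' + 1 - (i + 1)) * Usum xs x (i + 1))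
          = ((l' + 1).factorial : ℝ) * (Usum xs x (i + 1) * Usum xs x (l' - i)) := by
      intro i hi
      rw [show l' + 1 - (i + 1) = l' - i by omega, mul_comm (Usum xs x (l' - i))]
    rw [Finset.sum_congr rfl hcong]
    ring
end

section
/- Let k ≥ 1 be an odd integer and let q_0, q_1, …, q_k be real polynomials with q_k not identically zero. Define U_Q : ℝ[x] → ℝ[x] by U_Q(p) = q_0·p + q_1·p' + … + q_k·p^(k). Then U_Q does not preserve the set of non-negative polynomials of degree at most k+1: there exist a real number t_0 and a real number x_0 such that the non-negative polynomial p(x) = (x − t_0)^{k+1} satisfies (U_Q(p))(x_0) < 0. -/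
open Polynomial

theorem stmt_15 (k : ℕ) (hk : 1 ≤ k) (hodd : Odd k) (q : ℕ → Polynomial ℝ)
    (hqk : q k ≠ 0) :
    ∃ t₀ x₀ : ℝ,
      (∑ i ∈ Finset.range (k + 1),
        q i * (Polynomial.derivative^[i] ((Polynomial.X - Polynomial.C t₀) ^ (k + 1)))).eval x₀
        < 0 := by
  -- choose x₀ with q k not vanishing
  obtain ⟨x₀, hx₀⟩ : ∃ x : ℝ, (q k).eval x ≠ 0 := by
    by_contra h
    push_neg at h
    exact hqk (Polynomial.funext fun x => by simp [h x])
  -- the auxiliary polynomial P in u = x₀ - t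
  set a : ℕ → ℝ := fun i => (q i).eval x₀ * ((k+1).descFactorial i : ℝ) with ha
  set P : Polynomial ℝ := ∑ i ∈ Finset.range (k+1), C (a i) * X ^ (k - i) with hP
  have hP0 : P.eval 0 = a k := by
    rw [hP, Polynomial.eval_finset_sum]
    rw [Finset.sum_eq_single k]
    · simp
    · intro i hi hik
      have hik' : i < k := lt_of_le_of_ne (Nat.lt_succ_iff.mp (Finset.mem_range.mp hi)) hik
      simp [Nat.sub_ne_zero_of_lt hik', zero_pow (Nat.sub_ne_zero_of_lt hik')]
    · intro h; exact absurd (Finset.self_mem_range_succ k) h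
  have hak : a k ≠ 0 := by
    have : ((k+1).descFactorial k : ℝ) ≠ 0 := by
      have : (k+1).descFactorial k ≠ 0 := by
        rw [Ne, Nat.descFactorial_eq_zero_iff_lt]; omega
      exact_mod_cast this
    exact mul_ne_zero hx₀ this
  set c : ℝ := P.eval 0 with hc
  have hcne : c ≠ 0 := hP0 ▸ hak
  -- continuity: get δ
  have hcont : ContinuousAt (fun u => P.eval u) 0 := (Polynomial.continuous P).continuousAt
  obtain ⟨δ, hδpos, hδ⟩ := Metric.continuousAt_iff.mp hcont |c| (abs_pos.mpr hcne)
  set u₀ : ℝ := if 0 < c then -(δ/2) else δ/2 with hu₀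
  have habs : |u₀| = δ/2 := by
    rw [hu₀]; split
    · rw [abs_neg, abs_of_pos (by linarith)]
    · rw [abs_of_pos (by linarith)]
  have hu₀ne : dist u₀ 0 < δ := by
    rw [Real.dist_eq, sub_zero, habs]; linarith
  have hPu : |P.eval u₀ - c| < |c| := by
    have := hδ hu₀ne
    rwa [Real.dist_eq] at this
  have hneg : u₀ * P.eval u₀ < 0 := by
    rcases lt_or_gt_of_ne hcne with hc0 | hc0
    · -- c < 0, u₀ = δ/2 > 0, P.eval u₀ < 0
      have hu : u₀ = δ/2 := by rw [hu₀]; simp [not_lt.mpr hc0.le]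
      have : P.eval u₀ < 0 := by
        rw [abs_of_neg hc0] at hPu
        rcases abs_lt.mp hPu with ⟨h1, h2⟩; linarith
      exact mul_neg_of_pos_of_neg (by rw [hu]; linarith) this
    · have hu : u₀ = -(δ/2) := by rw [hu₀]; simp [hc0]
      have : 0 < P.eval u₀ := by
        rw [abs_of_pos hc0] at hPu
        rcases abs_lt.mp hPu with ⟨h1, h2⟩; linarith
      exact mul_neg_of_neg_of_pos (by rw [hu]; linarith) this
  refine ⟨x₀ - u₀, x₀, ?_⟩
  have key : (∑ i ∈ Finset.range (k + 1),
      q i * (Polynomial.derivative^[i] ((X - C (x₀ - u₀)) ^ (k + 1)))).eval x₀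
      = u₀ * P.eval u₀ := by
    rw [Polynomial.eval_finset_sum, hP, Polynomial.eval_finset_sum, Finset.mul_sum]
    apply Finset.sum_congr rfl
    intro i hi
    have hik : i ≤ k := Nat.lt_succ_iff.mp (Finset.mem_range.mp hi)
    rw [Polynomial.iterate_derivative_X_sub_pow]
    have hsub : k + 1 - i = (k - i) + 1 := by omega
    simp only [Polynomial.eval_mul, Polynomial.eval_smul, Polynomial.eval_pow,
      Polynomial.eval_sub, Polynomial.eval_X, Polynomial.eval_C, smul_eq_mul,
      Polynomial.eval_natCast]
    have hxu : x₀ - (x₀ - u₀) = u₀ := by ring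
    rw [hxu, hsub, pow_succ, ha]
    ring
  rw [key]
  exact hneg
end
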